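/- arXiv:2401.03422 — 3 statements merged into one kernel-verified Lean document; each statement's English description precedes it below -/
import Mathlib

section
/- If ξ and η are real-number generators (i.e. R(ξ) and R(η) hold), then their product, defined by (ξ·η)(x) = ⌊ξ(x)·η(x) / 2^x⌋ (the floor of 2^{-x}·ξ(x)·η(x), i.e. natural-number division of ξ(x)·η(x) by 2^x), is also a real-number generator: R(ξ·η) holds. -/
/-- `ξ : ℕ → ℕ` is a real-number generator: the sequence of dyadic fractions
`2^{-x} * ξ x` is a Cauchy sequence in the explicit sense. -/
def IsGen (ξ : ℕ → ℕ) : Prop :=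
  ∀ k : ℕ, ∃ x : ℕ, ∀ p : ℕ,
    2 ^ k * ((2 ^ p * (ξ x : ℤ) - (ξ (x + p) : ℤ)).natAbs) < 2 ^ (x + p)

/-- Equality of generators: `ξ ≐ η`. -/
def genEq (ξ η : ℕ → ℕ) : Prop :=
  ∀ k : ℕ, ∃ x : ℕ, ∀ p : ℕ,
    2 ^ k * (((ξ (x + p) : ℤ) - (η (x + p) : ℤ)).natAbs) < 2 ^ (x + p)

/-- Strict ordering of generators: `ξ ≺ η` (with truncated subtraction). -/
def genLt (ξ η : ℕ → ℕ) : Prop :=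
  ∃ k x : ℕ, ∀ p : ℕ, 2 ^ k * (η (x + p) - ξ (x + p)) ≥ 2 ^ (x + p)

/-- Pointwise addition of generators. -/
def genAdd (ξ η : ℕ → ℕ) : ℕ → ℕ := fun x => ξ x + η x

/-- Multiplication of generators: `(ξ·η)(x) = ⌊ξ(x)·η(x)/2^x⌋`. -/
def genMul (ξ η : ℕ → ℕ) : ℕ → ℕ := fun x => ξ x * η x / 2 ^ x

/-- The generator corresponding to the natural number `n`. -/
def fgen (n : ℕ) : ℕ → ℕ := fun l => n * 2 ^ l

/-! Writing `d ξ x p := 2^p ξ(x) - ξ(x+p)` for the Cauchy defect, division with remainder gives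
`2^(x+p) d(ξ·η) x p = 2^p η(x) d ξ x p + ξ(x+p) d η x p + (r' - 2^{2p} r)` with remainders
`0 ≤ r < 2^x`, `0 ≤ r' < 2^{x+p}`. A generator grows at most like `2^B 2^x`, and its defect
condition holds not only at one `x` but at every larger `x` too; so choosing `x` large enough
for both factors with precision `k + B + C + 2` makes every term on the right small. -/

open Filter

def genDefect (ξ : ℕ → ℕ) (x p : ℕ) : ℤ := 2 ^ p * (ξ x : ℤ) - ξ (x + p)

lemma isGen_iff {ξ : ℕ → ℕ} :
    IsGen ξ ↔ ∀ k, ∃ x, ∀ p, 2 ^ k * |genDefect ξ x p| < 2 ^ (x + p) := by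
  refine forall_congr' fun k => exists_congr fun x => forall_congr' fun p => ?_
  rw [genDefect, ← Int.natCast_natAbs]
  exact_mod_cast Iff.rfl

lemma genDefect_add (ξ : ℕ → ℕ) (x q p : ℕ) :
    genDefect ξ x (q + p) = 2 ^ p * genDefect ξ x q + genDefect ξ (x + q) p := by
  simp only [genDefect, add_assoc, pow_add]
  ring

namespace IsGen

variable {ξ : ℕ → ℕ}

lemma exists_le_two_pow_mul (hξ : IsGen ξ) : ∃ B, ∀ x, ξ x ≤ 2 ^ B * 2 ^ x := by
  obtain ⟨x₀, h⟩ := isGen_iff.1 hξ 0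
  set M := ∑ i ∈ Finset.range (x₀ + 1), ξ i + 1
  have le_M {x} (hx : x ≤ x₀) : ξ x < M :=
    Nat.lt_succ_of_le (Finset.single_le_sum (fun _ _ => Nat.zero_le _)
      (Finset.mem_range.2 (Nat.lt_succ_of_le hx)))
  suffices ∀ x, ξ x ≤ M * 2 ^ x from
    ⟨M, fun x => (this x).trans (Nat.mul_le_mul_right _ Nat.lt_two_pow_self.le)⟩
  intro x
  rcases le_or_gt x x₀ with hx | hx
  · exact (le_M hx).le.trans (Nat.le_mul_of_pos_right _ (Nat.two_pow_pos x))
  · obtain ⟨p, rfl⟩ := Nat.exists_eq_add_of_le hx.le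
    have hp := h p
    rw [pow_zero, one_mul, genDefect, abs_lt] at hp
    have hM : (ξ x₀ : ℤ) + 1 ≤ M := by exact_mod_cast le_M le_rfl
    have : (2 : ℤ) ^ p ≤ 2 ^ (x₀ + p) := pow_le_pow_right₀ one_le_two (Nat.le_add_left _ _)
    have : (ξ (x₀ + p) : ℤ) ≤ M * 2 ^ (x₀ + p) := by nlinarith
    exact_mod_cast this

lemma eventually_defect_lt (hξ : IsGen ξ) (k : ℕ) :
    ∀ᶠ x in atTop, ∀ p, 2 ^ k * |genDefect ξ x p| < 2 ^ (x + p) := by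
  obtain ⟨x₁, h⟩ := isGen_iff.1 hξ (k + 1)
  filter_upwards [eventually_ge_atTop x₁] with x hx p
  obtain ⟨q, rfl⟩ := Nat.exists_eq_add_of_le hx
  have hq := mul_lt_mul_of_pos_left (h q) (pow_pos two_pos p)
  have hqp := h (q + p)
  have htri : |genDefect ξ (x₁ + q) p| ≤
      |genDefect ξ x₁ (q + p)| + 2 ^ p * |genDefect ξ x₁ q| :=
    calc |genDefect ξ (x₁ + q) p|
        = |genDefect ξ x₁ (q + p) - 2 ^ p * genDefect ξ x₁ q| := by
          rw [genDefect_add, add_sub_cancel_left]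
      _ ≤ |genDefect ξ x₁ (q + p)| + |2 ^ p * genDefect ξ x₁ q| := abs_sub _ _
      _ = |genDefect ξ x₁ (q + p)| + 2 ^ p * |genDefect ξ x₁ q| := by
          rw [abs_mul, abs_pow, abs_two]
  have := mul_le_mul_of_nonneg_left htri (pow_nonneg zero_le_two k)
  rw [← add_assoc, pow_add 2 (x₁ + q), pow_succ] at hqp
  rw [pow_succ] at hq
  rw [pow_add 2 (x₁ + q)]
  linarith

end IsGen

lemma two_pow_mul_genDefect_genMul (ξ η : ℕ → ℕ) (x p : ℕ) :
    2 ^ (x + p) * genDefect (genMul ξ η) x p =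
      2 ^ p * η x * genDefect ξ x p + ξ (x + p) * genDefect η x p +
        (((ξ (x + p) * η (x + p) % 2 ^ (x + p) : ℕ) : ℤ) -
          2 ^ (2 * p) * (ξ x * η x % 2 ^ x : ℕ)) := by
  have h₁ : (2 : ℤ) ^ x * (genMul ξ η x : ℕ) + (ξ x * η x % 2 ^ x : ℕ) =
      ξ x * η x := by
    exact_mod_cast Nat.div_add_mod (ξ x * η x) (2 ^ x)
  have h₂ : (2 : ℤ) ^ (x + p) * (genMul ξ η (x + p) : ℕ) +
      (ξ (x + p) * η (x + p) % 2 ^ (x + p) : ℕ) = ξ (x + p) * η (x + p) := by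
    exact_mod_cast Nat.div_add_mod (ξ (x + p) * η (x + p)) (2 ^ (x + p))
  simp only [genDefect]
  linear_combination (2 : ℤ) ^ (2 * p) * h₁ - h₂

lemma abs_genDefect_genMul_lt (ξ η : ℕ → ℕ) (x p : ℕ) :
    2 ^ (x + p) * |genDefect (genMul ξ η) x p| <
      2 ^ p * η x * |genDefect ξ x p| + ξ (x + p) * |genDefect η x p| + 2 ^ (x + 2 * p) := by
  have hr : |((ξ (x + p) * η (x + p) % 2 ^ (x + p) : ℕ) : ℤ) -
      2 ^ (2 * p) * (ξ x * η x % 2 ^ x : ℕ)| < 2 ^ (x + 2 * p) := by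
    refine abs_sub_lt_of_nonneg_of_lt (by positivity) ?_ (by positivity) ?_
    · calc _ < (2 : ℤ) ^ (x + p) := by exact_mod_cast Nat.mod_lt _ (Nat.two_pow_pos _)
        _ ≤ 2 ^ (x + 2 * p) := pow_le_pow_right₀ one_le_two (by omega)
    · rw [pow_add, mul_comm ((2 : ℤ) ^ x)]
      have : ((ξ x * η x % 2 ^ x : ℕ) : ℤ) < 2 ^ x := by
        exact_mod_cast Nat.mod_lt _ (Nat.two_pow_pos _)
      gcongr
  rw [← abs_of_pos (pow_pos two_pos (x + p) : (0 : ℤ) < 2 ^ (x + p)), ← abs_mul,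
    two_pow_mul_genDefect_genMul]
  calc _ ≤ |2 ^ p * η x * genDefect ξ x p| + |ξ (x + p) * genDefect η x p| + |_| :=
        abs_add_three _ _ _
    _ < _ := by
      simp only [abs_mul, abs_pow, abs_two, Nat.abs_cast]
      linarith

lemma two_pow_mul_mul_abs_le {a B k K n : ℕ} {d : ℤ} (ha : a ≤ 2 ^ B * 2 ^ n)
    (hK : k + B + 2 ≤ K) (hd : 2 ^ K * |d| < 2 ^ n) :
    2 ^ (k + 2) * (a * |d|) ≤ (2 ^ n * 2 ^ n : ℤ) := by
  have ha' : (a : ℤ) ≤ 2 ^ B * 2 ^ n := by exact_mod_cast ha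
  calc 2 ^ (k + 2) * (a * |d|) ≤ 2 ^ (k + 2) * (2 ^ B * 2 ^ n * |d|) := by gcongr
    _ = 2 ^ n * (2 ^ (k + B + 2) * |d|) := by ring
    _ ≤ 2 ^ n * (2 ^ K * |d|) := by gcongr; exact one_le_two
    _ ≤ 2 ^ n * 2 ^ n := by gcongr

theorem mul_isGen (ξ η : ℕ → ℕ) (hξ : IsGen ξ) (hη : IsGen η) :
    IsGen (genMul ξ η) := by
  obtain ⟨B, hB⟩ := hξ.exists_le_two_pow_mul
  obtain ⟨C, hC⟩ := hη.exists_le_two_pow_mul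
  refine isGen_iff.2 fun k => ?_
  obtain ⟨x, hξx, hηx, hkx⟩ := ((hξ.eventually_defect_lt (k + B + C + 2)).and
    ((hη.eventually_defect_lt (k + B + C + 2)).and (eventually_ge_atTop (k + 1)))).exists
  refine ⟨x, fun p => ?_⟩
  have hηx' : 2 ^ p * η x ≤ 2 ^ C * 2 ^ (x + p) :=
    calc 2 ^ p * η x ≤ 2 ^ p * (2 ^ C * 2 ^ x) := Nat.mul_le_mul_left _ (hC x)
      _ = 2 ^ C * 2 ^ (x + p) := by ring
  have h₁ := two_pow_mul_mul_abs_le hηx' (by omega : k + C + 2 ≤ _) (hξx p)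
  have h₂ := two_pow_mul_mul_abs_le (hB (x + p)) (by omega : k + B + 2 ≤ _) (hηx p)
  have h₃ : (2 : ℤ) ^ (k + 1) * 2 ^ (x + 2 * p) ≤ 2 ^ (x + p) * 2 ^ (x + p) := by
    rw [← pow_add, ← pow_add]; exact pow_le_pow_right₀ one_le_two (by omega)
  refine lt_of_mul_lt_mul_left ?_ (pow_nonneg zero_le_two (x + p))
  calc 2 ^ (x + p) * (2 ^ k * |genDefect (genMul ξ η) x p|)
      = 2 ^ k * (2 ^ (x + p) * |genDefect (genMul ξ η) x p|) := mul_left_comm _ _ _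
    _ < 2 ^ k * (2 ^ p * η x * |genDefect ξ x p| + ξ (x + p) * |genDefect η x p| +
          2 ^ (x + 2 * p)) := by
      gcongr
      exact abs_genDefect_genMul_lt ξ η x p
    _ ≤ 2 ^ (x + p) * 2 ^ (x + p) := by
      push_cast at h₁
      rw [pow_add 2 k 2] at h₁ h₂
      rw [pow_succ] at h₃
      linarith
end

section
/- Equality of generators is a congruence with respect to multiplication: if ξ, ξ', η, η' are real-number generators with ξ ≐ ξ' and η ≐ η', then ξ·η ≐ ξ'·η'. -/
/-! A generator `ξ` is read through its dyadic values `ξ(n) / 2^n`. In these terms `ξ ≐ η` says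
exactly that the difference of the value sequences tends to `0`, and the Cauchy condition makes
the values of a generator eventually bounded. Since `⌊ξ(n)η(n)/2^n⌋ / 2^n` lies within `2^{-n}` of
the product of the values, the congruence reduces to `ab - a'b' = a(b - b') + (a - a')b'`. -/

open Filter Topology

lemma exists_forall_add_iff_eventually {P : ℕ → Prop} :
    (∃ x, ∀ p, P (x + p)) ↔ ∀ᶠ n in atTop, P n := by
  rw [eventually_atTop]
  refine exists_congr fun x => ⟨fun h n hn => ?_, fun h p => h _ (Nat.le_add_right x p)⟩
  simpa [Nat.add_sub_cancel' hn] using h (n - x)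

lemma tendsto_mul_sub_mul {ι α : Type*} [NonUnitalSeminormedRing α] {l : Filter ι}
    {a a' b b' : ι → α} (ha : IsBoundedUnder (· ≤ ·) l fun i => ‖a i‖)
    (hb' : IsBoundedUnder (· ≤ ·) l fun i => ‖b' i‖) (hda : Tendsto (a - a') l (𝓝 0))
    (hdb : Tendsto (b - b') l (𝓝 0)) : Tendsto (a * b - a' * b') l (𝓝 0) := by
  have h := (isBoundedUnder_le_mul_tendsto_zero ha hdb).add (hda.zero_mul_isBoundedUnder_le hb')
  rw [add_zero] at h
  refine h.congr fun i => ?_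
  simp only [Pi.sub_apply, Pi.mul_apply, mul_sub, sub_mul]
  abel

noncomputable def dyadicVal (ξ : ℕ → ℕ) (n : ℕ) : ℝ := ξ n / 2 ^ n

lemma two_pow_mul_natAbs_lt_iff (k n : ℕ) (d : ℤ) :
    2 ^ k * d.natAbs < 2 ^ n ↔ |(d : ℝ) / 2 ^ n| < (1 / 2) ^ k := by
  rw [← Nat.cast_lt (α := ℝ)]
  push_cast [Nat.cast_natAbs]
  rw [abs_div, abs_pow, abs_two, one_div_pow, div_lt_div_iff₀ (by positivity) (by positivity),
    one_mul, mul_comm]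

theorem genEq_iff_tendsto (ξ η : ℕ → ℕ) :
    genEq ξ η ↔ Tendsto (dyadicVal ξ - dyadicVal η) atTop (𝓝 0) := by
  rw [(Metric.nhds_basis_ball_pow one_half_pos one_half_lt_one).tendsto_right_iff]
  refine forall_congr' fun k => ?_
  simp only [true_implies, Metric.mem_ball, dist_zero_right, Real.norm_eq_abs, Pi.sub_apply,
    dyadicVal, ← sub_div]
  refine (exists_forall_add_iff_eventually
    (P := fun n => 2 ^ k * ((ξ n : ℤ) - η n).natAbs < 2 ^ n)).trans (eventually_congr ?_)
  exact .of_forall fun n => by exact_mod_cast two_pow_mul_natAbs_lt_iff k n _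

lemma IsGen.isBoundedUnder_dyadicVal {ξ : ℕ → ℕ} (hξ : IsGen ξ) :
    IsBoundedUnder (· ≤ ·) atTop fun n => ‖dyadicVal ξ n‖ := by
  obtain ⟨x, hx⟩ := hξ 0
  refine isBoundedUnder_of_eventually_le (a := dyadicVal ξ x + 1) ?_
  rw [← exists_forall_add_iff_eventually]
  refine ⟨x, fun p => ?_⟩
  have hdiff := (two_pow_mul_natAbs_lt_iff 0 (x + p) _).1 (hx p)
  push_cast at hdiff
  rw [pow_zero, sub_div, abs_lt] at hdiff
  have hx' : dyadicVal ξ x = 2 ^ p * ξ x / 2 ^ (x + p) := by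
    rw [dyadicVal, pow_add]; field_simp
  rw [Real.norm_of_nonneg (by unfold dyadicVal; positivity), hx', dyadicVal]
  linarith

lemma abs_dyadicVal_genMul_sub_mul_le (ξ η : ℕ → ℕ) (n : ℕ) :
    |dyadicVal (genMul ξ η) n - dyadicVal ξ n * dyadicVal η n| ≤ (1 / 2) ^ n := by
  set u : ℝ := (ξ n * η n : ℕ) / (2 ^ n : ℕ)
  have hfloor : ((genMul ξ η n : ℕ) : ℝ) = ⌊u⌋₊ :=
    congrArg Nat.cast (Nat.floor_div_eq_div (K := ℝ) (ξ n * η n) (2 ^ n)).symm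
  have hu : 0 ≤ u := by positivity
  have hprod : dyadicVal ξ n * dyadicVal η n = u / 2 ^ n := by
    simp only [u, dyadicVal]; push_cast; ring
  rw [dyadicVal, hfloor, hprod, ← sub_div, abs_div, abs_of_pos (by positivity : (0:ℝ) < 2 ^ n),
    one_div_pow, div_le_div_iff_of_pos_right (by positivity), abs_sub_le_iff]
  constructor <;> linarith [Nat.floor_le hu, Nat.lt_floor_add_one u]

lemma tendsto_dyadicVal_genMul_sub_mul (ξ η : ℕ → ℕ) :
    Tendsto (dyadicVal (genMul ξ η) - dyadicVal ξ * dyadicVal η) atTop (𝓝 0) :=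
  squeeze_zero_norm (abs_dyadicVal_genMul_sub_mul_le ξ η)
    (tendsto_pow_atTop_nhds_zero_of_lt_one (by norm_num) one_half_lt_one)

theorem genEq_mul_congr_general (ξ ξ' η η' : ℕ → ℕ)
    (hξ : IsGen ξ) (hη' : IsGen η')
    (h1 : genEq ξ ξ') (h2 : genEq η η') :
    genEq (genMul ξ η) (genMul ξ' η') := by
  rw [genEq_iff_tendsto] at h1 h2 ⊢
  have hmul := tendsto_mul_sub_mul hξ.isBoundedUnder_dyadicVal hη'.isBoundedUnder_dyadicVal h1 h2
  have h := ((tendsto_dyadicVal_genMul_sub_mul ξ η).sub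
    (tendsto_dyadicVal_genMul_sub_mul ξ' η')).add hmul
  rw [sub_zero, add_zero] at h
  refine h.congr fun n => ?_
  simp only [Pi.sub_apply, Pi.mul_apply]
  ring

theorem genEq_mul_congr (ξ ξ' η η' : ℕ → ℕ)
    (hξ : IsGen ξ) (hξ' : IsGen ξ') (hη : IsGen η) (hη' : IsGen η')
    (h1 : genEq ξ ξ') (h2 : genEq η η') :
    genEq (genMul ξ η) (genMul ξ' η') :=
  genEq_mul_congr_general ξ ξ' η η' hξ hη' h1 h2
end

section
/- For real-number generators f and g, generator equality is characterized by the order relation: f ≐ g if and only if ¬(g ≺ f ∨ f ≺ g). -/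
def GenCauchyAt (ξ : ℕ → ℕ) (k a : ℕ) : Prop :=
  ∀ p, (2 : ℤ) ^ k * |2 ^ p * (ξ a : ℤ) - ξ (a + p)| < 2 ^ (a + p)

theorem IsGen.exists_genCauchyAt {ξ : ℕ → ℕ} (h : IsGen ξ) (k : ℕ) :
    ∃ a, GenCauchyAt ξ k a := by
  obtain ⟨a, ha⟩ := h k
  exact ⟨a, fun p => by rw [← Int.natCast_natAbs]; exact_mod_cast ha p⟩

theorem GenCauchyAt.of_le {ξ : ℕ → ℕ} {k a n : ℕ} (h : GenCauchyAt ξ (k + 1) a) (han : a ≤ n) :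
    GenCauchyAt ξ k n := by
  intro q
  obtain ⟨p, rfl⟩ := Nat.exists_eq_add_of_le han
  set z₁ : ℤ := 2 ^ p * (ξ a : ℤ) - ξ (a + p)
  set z₂ : ℤ := 2 ^ (p + q) * (ξ a : ℤ) - ξ (a + p + q)
  have h₁ : 2 ^ (k + 1) * |z₁| < 2 ^ (a + p) := h p
  have h₂ : 2 ^ (k + 1) * |z₂| < 2 ^ (a + p + q) := by simpa only [← add_assoc] using h (p + q)
  have h₁' := mul_lt_mul_of_pos_left h₁ (by positivity : (0 : ℤ) < 2 ^ q)
  calc 2 ^ k * |2 ^ q * (ξ (a + p) : ℤ) - ξ (a + p + q)| = 2 ^ k * |z₂ - 2 ^ q * z₁| := by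
        congr 2; simp only [z₁, z₂, pow_add]; ring
    _ ≤ 2 ^ k * (|z₂| + 2 ^ q * |z₁|) := by
        gcongr; simpa [abs_mul] using abs_sub z₂ (2 ^ q * z₁)
    _ < 2 ^ (a + p + q) := by
        simp only [pow_succ, pow_add] at h₁' h₂ ⊢
        linarith

theorem GenCauchyAt.abs_mul_lt {ξ : ℕ → ℕ} {k a : ℕ} (h : GenCauchyAt ξ k a) (p : ℕ) :
    |(2 : ℤ) ^ k * (2 ^ p * (ξ a : ℤ) - ξ (a + p))| < 2 ^ (a + p) := by
  rw [abs_mul, abs_of_pos (by positivity)]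
  exact h p

theorem le_mul_tsub_of_le_mul_sub {a b c d : ℕ} (h : (d : ℤ) ≤ c * ((a : ℤ) - b)) :
    d ≤ c * (a - b) := by
  rcases le_total b a with hba | hab
  · exact_mod_cast (Nat.cast_sub hba (R := ℤ)) ▸ h
  · have : (c : ℤ) * ((a : ℤ) - b) ≤ 0 :=
      mul_nonpos_of_nonneg_of_nonpos (by positivity) (sub_nonpos.2 (by exact_mod_cast hab))
    omega

theorem genEq_symm {ξ η : ℕ → ℕ} (h : genEq ξ η) : genEq η ξ := by
  intro k
  obtain ⟨x, hx⟩ := h k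
  exact ⟨x, fun p => by rw [← Int.natAbs_neg, neg_sub]; exact hx p⟩

theorem not_genLt_of_genEq {ξ η : ℕ → ℕ} (h : genEq ξ η) : ¬genLt η ξ := by
  rintro ⟨k, x, hlt⟩
  obtain ⟨y, hy⟩ := h k
  have hx := hlt y
  have hy := hy x
  rw [Nat.add_comm y x] at hy
  have : ξ (x + y) - η (x + y) ≤ ((ξ (x + y) : ℤ) - η (x + y)).natAbs := by omega
  exact (hy.trans_le (hx.trans (Nat.mul_le_mul_left _ this))).false

theorem genLt_of_gap {ξ η : ℕ → ℕ} {k n : ℕ} (hξ : GenCauchyAt ξ (k + 2) n)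
    (hη : GenCauchyAt η (k + 2) n) (hgap : (2 : ℤ) ^ n ≤ 2 ^ k * ((ξ n : ℤ) - η n)) :
    genLt η ξ := by
  refine ⟨k + 2, n, fun p => le_mul_tsub_of_le_mul_sub ?_⟩
  obtain ⟨-, hξp⟩ := abs_lt.1 (hξ.abs_mul_lt p)
  obtain ⟨hηp, -⟩ := abs_lt.1 (hη.abs_mul_lt p)
  have hgap' := mul_le_mul_of_nonneg_left hgap (by positivity : (0 : ℤ) ≤ 2 ^ 2 * 2 ^ p)
  push_cast
  simp only [pow_add] at *
  linarith [(by positivity : (0 : ℤ) < 2 ^ n * 2 ^ p)]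

theorem genLt_or_genLt_of_not_genEq {ξ η : ℕ → ℕ} (hξ : IsGen ξ) (hη : IsGen η)
    (h : ¬genEq ξ η) : genLt η ξ ∨ genLt ξ η := by
  simp only [genEq, not_forall, not_exists, not_lt] at h
  obtain ⟨k, hk⟩ := h
  obtain ⟨a, ha⟩ := hξ.exists_genCauchyAt (k + 3)
  obtain ⟨b, hb⟩ := hη.exists_genCauchyAt (k + 3)
  obtain ⟨p, hp⟩ := hk (max a b)
  set n := max a b + p
  have hgap : (2 : ℤ) ^ n ≤ 2 ^ k * |(ξ n : ℤ) - η n| := by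
    rw [← Int.natCast_natAbs]; exact_mod_cast hp
  have hξn := ha.of_le (n := n) (by omega)
  have hηn := hb.of_le (n := n) (by omega)
  rcases le_total (η n : ℤ) (ξ n) with hle | hle
  · rw [abs_of_nonneg (sub_nonneg.2 hle)] at hgap
    exact Or.inl (genLt_of_gap hξn hηn hgap)
  · rw [abs_sub_comm, abs_of_nonneg (sub_nonneg.2 hle)] at hgap
    exact Or.inr (genLt_of_gap hηn hξn hgap)

theorem genEq_iff_not_lt (f g : ℕ → ℕ) (hf : IsGen f) (hg : IsGen g) :
    genEq f g ↔ ¬(genLt g f ∨ genLt f g) :=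
  ⟨fun h => not_or.2 ⟨not_genLt_of_genEq h, not_genLt_of_genEq (genEq_symm h)⟩,
    fun h => not_not.1 (mt (genLt_or_genLt_of_not_genEq hf hg) h)⟩
end
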